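/- Let m ≥ 1, let σ be a generator of Gal(𝔽_{q^m}/𝔽_q), and let a_1,…,a_{q−1} ∈ 𝔽_{q^m}^* have pairwise distinct norms N_{q^m/q}(a_i). Then for every pair (f_0, f_1) ∈ 𝔽_{q^m}² with (f_0, f_1) ≠ (0,0) one has Σ_{i=1}^{q−1} dim_{𝔽_q}({ f_0·y + f_1·a_i·σ(y) : y ∈ 𝔽_{q^m} }) + ε_0 + ε_∞ = (q−1)·m + 1, where ε_0 = 1 if f_0 ≠ 0 and 0 otherwise, and ε_∞ = 1 if f_1 ≠ 0 and 0 otherwise. In other words, the 2-dimensional doubly-extended linearized Reed-Solomon code (with full-length blocks n = m, t = q−1 blocks, and the two extension blocks) is a one-weight maximum sum-rank distance code: every nonzero codeword has sum-rank weight (q−1)m + 1. -/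

import Mathlib

/-!
For `f₁ ≠ 0` the kernel of `y ↦ f₀ y + f₁ a σ(y)` is the space of solutions of `σ y = c y` with
`c = -f₀ / (f₁ a)`. The ratio of two nonzero solutions is fixed by `σ`, hence lies in `𝔽_q`, so this
space has dimension at most one; by Hilbert 90 it is nonzero exactly when `N(c) = 1`, that is, when
`N(a) = N(-f₀ / f₁)`. The `q - 1` distinct norms `N(aᵢ)` exhaust `𝔽_q^*`, so exactly one block has a
one-dimensional kernel when `f₀ ≠ 0`, and none does when `f₀ = 0` or `f₁ = 0`. Rank–nullity turns
this into the weight `(q - 1) m + 1`.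
-/

noncomputable def combMap (Fq Fqm : Type) [Field Fq] [Field Fqm] [Algebra Fq Fqm]
    (σ : Fqm ≃ₐ[Fq] Fqm) (f₀ f₁ a : Fqm) : Fqm →ₗ[Fq] Fqm where
  toFun y := f₀ * y + f₁ * (a * σ y)
  map_add' x y := by simp only [map_add, mul_add]; ring
  map_smul' c x := by
    simp only [_root_.map_smul, mul_smul_comm, smul_add, RingHom.id_apply]

open Finset Module

theorem prod_pow_range_orderOf_eq_prod_univ {G M : Type*} [Group G] [Fintype G] [CommMonoid M]
    {g : G} (hg : ∀ x, x ∈ Subgroup.zpowers g) (f : G → M) :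
    ∏ l ∈ range (orderOf g), f (g ^ l) = ∏ x, f x := by
  classical
  have himage : (range (orderOf g)).image (g ^ ·) = univ := eq_univ_of_forall fun x =>
    (isOfFinOrder_of_finite g).mem_powers_iff_mem_range_orderOf.1
      (mem_powers_iff_mem_zpowers.2 (hg x))
  rw [← himage, prod_image fun i hi j hj =>
    pow_injOn_Iio_orderOf (by simpa using hi) (by simpa using hj)]

theorem sum_ite_apply_eq_of_injective {K : Type*} [Field K] [Fintype K] [DecidableEq K] {q : ℕ}
    (hq : Fintype.card K = q) {ν : Fin (q - 1) → K} (hν : Function.Injective ν)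
    (hν0 : ∀ i, ν i ≠ 0) (x : K) :
    ∑ i, (if ν i = x then 1 else 0 : ℕ) = if x ≠ 0 then 1 else 0 := by
  split_ifs with hx
  · let νu : Fin (q - 1) → Kˣ := fun i => Units.mk0 (ν i) (hν0 i)
    have hνu : Function.Bijective νu := (Fintype.bijective_iff_injective_and_card νu).2
      ⟨fun i j h => hν (congrArg Units.val h), by simp [Fintype.card_units, hq]⟩
    obtain ⟨i₀, hi₀⟩ := hνu.2 (Units.mk0 x hx)
    have hi₀ : ν i₀ = x := congrArg Units.val hi₀
    simp only [← hi₀, hν.eq_iff, sum_ite_eq', mem_univ, if_true]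
  · simp [not_not.1 hx, hν0]

section CyclicGalois

variable {K L : Type} [Field K] [Field L] [Algebra K L] {σ : L ≃ₐ[K] L}

theorem mem_ker_sub_mulLeft_iff {c y : L} :
    y ∈ LinearMap.ker (σ.toLinearMap - LinearMap.mulLeft K c) ↔ σ y = c * y := by
  simp [sub_eq_zero]

theorem ker_combMap_eq_ker_sub_mulLeft {f₀ f₁ a : L} (h : f₁ * a ≠ 0) :
    LinearMap.ker (combMap K L σ f₀ f₁ a) =
      LinearMap.ker (σ.toLinearMap - LinearMap.mulLeft K (-f₀ / (f₁ * a))) := by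
  ext y
  rw [mem_ker_sub_mulLeft_iff, LinearMap.mem_ker, div_mul_eq_mul_div, eq_div_iff h]
  change f₀ * y + f₁ * (a * σ y) = 0 ↔ _
  constructor <;> intro hy <;> linear_combination hy

theorem ker_combMap_of_f₁_eq_zero {f₀ f₁ a : L} (hf₀ : f₀ ≠ 0) (hf₁ : f₁ = 0) :
    LinearMap.ker (combMap K L σ f₀ f₁ a) = ⊥ :=
  LinearMap.ker_eq_bot'.2 fun y hy => by
    change f₀ * y + f₁ * (a * σ y) = 0 at hy
    simpa [hf₀, hf₁] using hy

variable [FiniteDimensional K L]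

theorem norm_eq_one_of_apply_eq_mul {c y : L} (hy : y ≠ 0) (h : σ y = c * y) :
    Algebra.norm K c = 1 := by
  have hnorm := congrArg (Algebra.norm K) h
  rw [Algebra.norm_eq_of_algEquiv, map_mul] at hnorm
  exact (mul_eq_right₀ (Algebra.norm_ne_zero_iff.2 hy)).1 hnorm.symm

variable [IsGalois K L]

theorem algebraMap_norm_eq_prod_range_finrank (hσ : ∀ τ, τ ∈ Subgroup.zpowers σ) (y : L) :
    algebraMap K L (Algebra.norm K y) = ∏ l ∈ range (finrank K L), (σ ^ l) y := by
  rw [Algebra.norm_eq_prod_automorphisms, ← IsGalois.card_aut_eq_finrank,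
    ← orderOf_eq_card_of_forall_mem_zpowers hσ,
    prod_pow_range_orderOf_eq_prod_univ hσ (fun τ : L ≃ₐ[K] L => τ y)]

theorem mem_range_algebraMap_of_apply_eq (hσ : ∀ τ, τ ∈ Subgroup.zpowers σ) {x : L}
    (hx : σ x = x) : x ∈ Set.range (algebraMap K L) := by
  have hstab : σ ∈ MulAction.stabilizer (L ≃ₐ[K] L) x := hx
  exact (IsGalois.mem_range_algebraMap_iff_fixed x).2 fun τ =>
    Subgroup.zpowers_le.2 hstab (hσ τ)

theorem exists_apply_eq_mul_of_norm_eq_one (hσ : ∀ τ, τ ∈ Subgroup.zpowers σ) {c : L}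
    (hc : Algebra.norm K c = 1) : ∃ y ≠ 0, σ y = c * y := by
  have : IsCyclic (L ≃ₐ[K] L) := ⟨σ, hσ⟩
  obtain ⟨y, hy⟩ := groupCohomology.exists_div_of_norm_eq_one hσ (x := c⁻¹)
    (by rw [Algebra.norm_inv, hc, inv_one])
  have hc0 : c ≠ 0 := by rintro rfl; simp at hc
  rw [div_eq_iff (by simp), eq_inv_mul_iff_mul_eq₀ hc0] at hy
  exact ⟨y, y.ne_zero, hy.symm⟩

theorem finrank_ker_sub_mulLeft_le_one (hσ : ∀ τ, τ ∈ Subgroup.zpowers σ) (c : L) :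
    finrank K (LinearMap.ker (σ.toLinearMap - LinearMap.mulLeft K c)) ≤ 1 := by
  set E := LinearMap.ker (σ.toLinearMap - LinearMap.mulLeft K c)
  rcases eq_or_ne E ⊥ with hbot | hne
  · rw [hbot, finrank_bot]; exact zero_le_one
  obtain ⟨y₀, hy₀, hy₀0⟩ := (Submodule.ne_bot_iff E).1 hne
  refine finrank_le_one ⟨y₀, hy₀⟩ fun ⟨y, hy⟩ => ?_
  rw [mem_ker_sub_mulLeft_iff] at hy hy₀
  have hc : c ≠ 0 := by
    rintro rfl
    exact hy₀0 (σ.injective (by simpa using hy₀))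
  have hfix : σ (y / y₀) = y / y₀ := by
    rw [map_div₀, hy, hy₀, mul_div_mul_left _ _ hc]
  obtain ⟨d, hd⟩ := mem_range_algebraMap_of_apply_eq hσ hfix
  exact ⟨d, Subtype.ext (by simp [Algebra.smul_def, hd, hy₀0])⟩

theorem ker_sub_mulLeft_ne_bot_iff (hσ : ∀ τ, τ ∈ Subgroup.zpowers σ) (c : L) :
    LinearMap.ker (σ.toLinearMap - LinearMap.mulLeft K c) ≠ ⊥ ↔ Algebra.norm K c = 1 := by
  simp only [Submodule.ne_bot_iff, mem_ker_sub_mulLeft_iff]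
  exact ⟨fun ⟨y, hy, hy0⟩ => norm_eq_one_of_apply_eq_mul hy0 hy,
    fun hc => (exists_apply_eq_mul_of_norm_eq_one hσ hc).imp fun y ⟨hy0, hy⟩ => ⟨hy, hy0⟩⟩

theorem finrank_ker_sub_mulLeft [DecidableEq K] (hσ : ∀ τ, τ ∈ Subgroup.zpowers σ) (c : L) :
    finrank K (LinearMap.ker (σ.toLinearMap - LinearMap.mulLeft K c)) =
      if Algebra.norm K c = 1 then 1 else 0 := by
  have hne := (not_congr Submodule.finrank_eq_zero).trans (ker_sub_mulLeft_ne_bot_iff hσ c)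
  have hle := finrank_ker_sub_mulLeft_le_one hσ c
  split_ifs with hc
  · have := hne.2 hc
    omega
  · exact not_not.1 (mt hne.1 hc)

theorem finrank_ker_combMap [DecidableEq K] (hσ : ∀ τ, τ ∈ Subgroup.zpowers σ) {f₀ f₁ a : L}
    (hf₁ : f₁ ≠ 0) (ha : a ≠ 0) :
    finrank K (LinearMap.ker (combMap K L σ f₀ f₁ a)) =
      if Algebra.norm K a = Algebra.norm K (-f₀ / f₁) then 1 else 0 := by
  have hnorm : Algebra.norm K (-f₀ / (f₁ * a)) = 1 ↔
      Algebra.norm K a = Algebra.norm K (-f₀ / f₁) := by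
    rw [← div_div, div_eq_mul_inv _ a, map_mul, Algebra.norm_inv,
      mul_inv_eq_one₀ (Algebra.norm_ne_zero_iff.2 ha), eq_comm]
  rw [ker_combMap_eq_ker_sub_mulLeft (mul_ne_zero hf₁ ha), finrank_ker_sub_mulLeft hσ]
  exact if_congr hnorm rfl rfl

end CyclicGalois

theorem sum_finrank_ker_combMap_add_one {K L : Type} [Field K] [Field L] [Algebra K L]
    [Fintype K] [Finite L] [DecidableEq L] {q : ℕ} (hq : Fintype.card K = q) {σ : L ≃ₐ[K] L}
    (hσ : ∀ τ, τ ∈ Subgroup.zpowers σ) {a : Fin (q - 1) → L} (ha : ∀ i, a i ≠ 0)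
    (hnorm : Function.Injective fun i => Algebra.norm K (a i)) {f₀ f₁ : L}
    (hf : (f₀, f₁) ≠ (0, 0)) :
    ∑ i, finrank K (LinearMap.ker (combMap K L σ f₀ f₁ (a i))) + 1 =
      (if f₀ ≠ 0 then 1 else 0) + (if f₁ ≠ 0 then 1 else 0) := by
  classical
  obtain rfl | hf₁ := eq_or_ne f₁ 0
  · have hf₀ : f₀ ≠ 0 := by rintro rfl; exact hf rfl
    simp [ker_combMap_of_f₁_eq_zero hf₀ rfl, hf₀]
  have hnorm0 : ∀ i, Algebra.norm K (a i) ≠ 0 := fun i => Algebra.norm_ne_zero_iff.2 (ha i)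
  simp only [finrank_ker_combMap hσ hf₁ (ha _), sum_ite_apply_eq_of_injective hq hnorm hnorm0,
    Algebra.norm_ne_zero_iff, div_ne_zero_iff, neg_ne_zero]
  simp [hf₁]

theorem doublyExtendedLRS_one_weight_general
    (Fq Fqm : Type) [Field Fq] [Field Fqm] [Fintype Fq] [Fintype Fqm] [Algebra Fq Fqm]
    [DecidableEq Fqm]
    (q m : ℕ) (hq : Fintype.card Fq = q) (hm : Module.finrank Fq Fqm = m)
    (σ : Fqm ≃ₐ[Fq] Fqm) (hσ : ∀ τ : Fqm ≃ₐ[Fq] Fqm, τ ∈ Subgroup.zpowers σ)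
    (a : Fin (q - 1) → Fqm) (ha0 : ∀ i, a i ≠ 0)
    (hnorm : ∀ i j : Fin (q - 1),
      (∏ l ∈ Finset.range m, (σ ^ l) (a i)) = (∏ l ∈ Finset.range m, (σ ^ l) (a j)) → i = j)
    (f₀ f₁ : Fqm) (hf : (f₀, f₁) ≠ (0, 0)) :
    (∑ i : Fin (q - 1),
        Module.finrank Fq (LinearMap.range (combMap Fq Fqm σ f₀ f₁ (a i))))
      + (if f₀ ≠ 0 then 1 else 0) + (if f₁ ≠ 0 then 1 else 0)
      = (q - 1) * m + 1 := by
  have hnorm_injective : Function.Injective fun i => Algebra.norm Fq (a i) := fun i j h =>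
    hnorm i j (by simp only [← hm, ← algebraMap_norm_eq_prod_range_finrank hσ, h])
  have hrank_nullity : ∑ i : Fin (q - 1),
      (finrank Fq (LinearMap.range (combMap Fq Fqm σ f₀ f₁ (a i))) +
        finrank Fq (LinearMap.ker (combMap Fq Fqm σ f₀ f₁ (a i)))) = (q - 1) * m := by
    simp [LinearMap.finrank_range_add_finrank_ker, hm]
  have hker := sum_finrank_ker_combMap_add_one hq hσ ha0 hnorm_injective hf
  rw [sum_add_distrib] at hrank_nullity
  omega

/-- 2-dimensional doubly-extended linearized Reed–Solomon codes are
one-weight MSRD: for every `(f₀, f₁) ≠ (0,0)` the sum of the `Fq`-dimensions of the images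
of `y ↦ f₀ y + f₁ aᵢ σ(y)` plus the two extension contributions equals `(q-1)·m + 1`. -/
theorem doublyExtendedLRS_one_weight
    (Fq Fqm : Type) [Field Fq] [Field Fqm] [Fintype Fq] [Fintype Fqm] [Algebra Fq Fqm]
    [DecidableEq Fqm]
    (q m : ℕ) (hq : Fintype.card Fq = q) (hm : Module.finrank Fq Fqm = m) (hm1 : 1 ≤ m)
    (σ : Fqm ≃ₐ[Fq] Fqm) (hσ : ∀ τ : Fqm ≃ₐ[Fq] Fqm, τ ∈ Subgroup.zpowers σ)
    (a : Fin (q - 1) → Fqm) (ha0 : ∀ i, a i ≠ 0)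
    (hnorm : ∀ i j : Fin (q - 1),
      (∏ l ∈ Finset.range m, (σ ^ l) (a i)) = (∏ l ∈ Finset.range m, (σ ^ l) (a j)) → i = j)
    (f₀ f₁ : Fqm) (hf : (f₀, f₁) ≠ (0, 0)) :
    (∑ i : Fin (q - 1),
        Module.finrank Fq (LinearMap.range (combMap Fq Fqm σ f₀ f₁ (a i))))
      + (if f₀ ≠ 0 then 1 else 0) + (if f₁ ≠ 0 then 1 else 0)
      = (q - 1) * m + 1 :=
  doublyExtendedLRS_one_weight_general Fq Fqm q m hq hm σ hσ a ha0 hnorm f₀ f₁ hf
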